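/- arXiv:1411.6578 — 3 statements merged into one kernel-verified Lean document; each statement's English description precedes it below -/
import Mathlib

section
/- For every x > 0, log x − 1/(2x) − 1/x² ≤ ψ₀(x) ≤ log x, where ψ₀ is the digamma function. Consequently ψ₀(2x) − ψ₀(x) − log 2 ≤ 1/(4x) + 1/x² for all x > 0. -/
open Set Filter Topology Finset

/-- The digamma function `ψ₀ = (log ∘ Γ)'`. -/
noncomputable def digamma (x : ℝ) : ℝ := deriv (fun y => Real.log (Real.Gamma y)) x




lemma hder {x : ℝ} (hx : 0 < x) :
    DifferentiableAt ℝ (fun y => Real.log (Real.Gamma y)) x := by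
  refine (Real.differentiableAt_Gamma ?_).log (Real.Gamma_ne_zero ?_) <;>
  exact fun m => by have := Nat.cast_nonneg (α := ℝ) m; intro h; linarith

lemma digamma_add_one {x : ℝ} (hx : 0 < x) : digamma (x + 1) = digamma x + 1 / x := by
  unfold digamma
  rw [← deriv_comp_add_const, one_div, ← Real.deriv_log,
    ← deriv_fun_add (hder hx) (Real.differentiableAt_log hx.ne')]
  apply Filter.EventuallyEq.deriv_eq
  filter_upwards [eventually_gt_nhds hx] with y hy
  rw [Real.Gamma_add_one hy.ne', Real.log_mul hy.ne' (Real.Gamma_pos_of_pos hy).ne', add_comm]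

lemma digamma_le_log {y : ℝ} (hy : 0 < y) : digamma y ≤ Real.log y := by
  have h := Real.convexOn_log_Gamma.deriv_le_slope (mem_Ioi.mpr hy)
    (mem_Ioi.mpr (by linarith : (0:ℝ) < y + 1)) (lt_add_one y) ?_
  · rw [slope_def_field, Function.comp_apply, Function.comp_apply,
      Real.Gamma_add_one hy.ne', Real.log_mul hy.ne' (Real.Gamma_pos_of_pos hy).ne',
      add_sub_cancel_right, add_sub_cancel_left, div_one] at h
    simpa [digamma, Function.comp_def] using h
  · simpa [Function.comp_def] using hder hy

lemma log_le_digamma_add_one {y : ℝ} (hy : 0 < y) : Real.log y ≤ digamma (y + 1) := by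
  have h := Real.convexOn_log_Gamma.slope_le_deriv (mem_Ioi.mpr hy)
    (mem_Ioi.mpr (by linarith : (0:ℝ) < y + 1)) (lt_add_one y) ?_
  · rw [slope_def_field, Function.comp_apply, Function.comp_apply,
      Real.Gamma_add_one hy.ne', Real.log_mul hy.ne' (Real.Gamma_pos_of_pos hy).ne',
      add_sub_cancel_right, add_sub_cancel_left, div_one] at h
    simpa [digamma, Function.comp_def] using h
  · simpa [Function.comp_def] using hder (by linarith : (0:ℝ) < y + 1)


lemma digamma_add_nat {x : ℝ} (hx : 0 < x) (n : ℕ) :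
    digamma (x + n) = digamma x + ∑ k ∈ Finset.range n, 1 / (x + k) := by
  induction n with
  | zero => simp
  | succ n ih =>
      have h1 : x + (n + 1 : ℕ) = (x + n) + 1 := by push_cast; ring
      rw [h1, digamma_add_one (by positivity), ih, Finset.sum_range_succ, add_assoc]

lemma log_add_nat {x : ℝ} (hx : 0 < x) (n : ℕ) :
    Real.log (x + n) = Real.log x + ∑ k ∈ Finset.range n, Real.log (1 + 1 / (x + k)) := by
  induction n with
  | zero => simp
  | succ n ih =>
      have hxn : (0:ℝ) < x + n := by positivity
      have h1 : x + (n + 1 : ℕ) = (x + n) * (1 + 1 / (x + n)) := by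
        field_simp; push_cast; ring
      rw [h1, Real.log_mul hxn.ne' (by positivity), ih, Finset.sum_range_succ, add_assoc]

-- elementary inequalities
lemma aux_log_ge {t : ℝ} (ht : 0 ≤ t) : t - t ^ 2 / 2 ≤ Real.log (1 + t) := by
  have key : MonotoneOn (fun t : ℝ => Real.log (1 + t) - t + t ^ 2 / 2) (Set.Ici 0) := by
    have hd : ∀ s ∈ interior (Set.Ici (0:ℝ)),
        HasDerivAt (fun t : ℝ => Real.log (1 + t) - t + t ^ 2 / 2)
          ((1 + s)⁻¹ * 1 - 1 + (2 * s ^ 1) / 2) s := by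
      intro s hs
      rw [interior_Ici] at hs
      have hs0 : (0:ℝ) < s := hs
      exact (((Real.hasDerivAt_log (by first | (intro h; linarith) | (simp only [id_eq]; intro h; linarith))).comp s
        ((hasDerivAt_id s).const_add 1)).sub (hasDerivAt_id s)).add
        ((hasDerivAt_pow 2 s).div_const 2)
    apply monotoneOn_of_deriv_nonneg (convex_Ici 0)
    · apply ContinuousOn.add (ContinuousOn.sub ?_ (continuousOn_id)) (by fun_prop)
      apply ContinuousOn.log (by fun_prop)
      intro s hs; simp only [Set.mem_Ici] at hs; intro h; linarith
    · exact fun s hs => ((hd s hs).differentiableAt).differentiableWithinAt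
    · intro s hs
      rw [(hd s hs).deriv]
      rw [interior_Ici] at hs
      have hs0 : (0:ℝ) < s := hs
      have : (1 + s)⁻¹ * 1 - 1 + (2 * s ^ 1) / 2 = s ^ 2 / (1 + s) := by
        field_simp; ring
      rw [this]; positivity
  have h0 : (0:ℝ) ∈ Set.Ici (0:ℝ) := Set.mem_Ici.mpr le_rfl
  have := key h0 (Set.mem_Ici.mpr ht) ht
  simp only [Real.log_one, add_zero] at this
  nlinarith [this]

lemma aux_log_le {t : ℝ} (ht : 0 ≤ t) : Real.log (1 + t) ≤ t / 2 + t / (2 * (1 + t)) := by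
  have key : MonotoneOn (fun t : ℝ => t / 2 + t / (2 * (1 + t)) - Real.log (1 + t))
      (Set.Ici 0) := by
    have hd : ∀ s ∈ interior (Set.Ici (0:ℝ)),
        HasDerivAt (fun t : ℝ => t / 2 + t / (2 * (1 + t)) - Real.log (1 + t))
          (1 / 2 + (1 * (2 * (1 + s)) - s * (2 * 1)) / (2 * (1 + s)) ^ 2 - (1 + s)⁻¹ * 1) s := by
      intro s hs
      rw [interior_Ici] at hs
      have hs0 : (0:ℝ) < s := hs
      have hne : 2 * (1 + s) ≠ 0 := by positivity
      exact (((hasDerivAt_id s).div_const 2).add ((hasDerivAt_id s).div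
        (((hasDerivAt_id s).const_add 1).const_mul 2) hne)).sub
        ((Real.hasDerivAt_log (by first | (intro h; linarith) | (simp only [id_eq]; intro h; linarith))).comp s ((hasDerivAt_id s).const_add 1))
    apply monotoneOn_of_deriv_nonneg (convex_Ici 0)
    · apply ContinuousOn.sub
      · apply ContinuousOn.add (by fun_prop)
        apply ContinuousOn.div (by fun_prop) (by fun_prop)
        intro s hs; simp only [Set.mem_Ici] at hs; positivity
      · apply ContinuousOn.log (by fun_prop)
        intro s hs; simp only [Set.mem_Ici] at hs; intro h; linarith
    · exact fun s hs => ((hd s hs).differentiableAt).differentiableWithinAt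
    · intro s hs
      rw [(hd s hs).deriv]
      rw [interior_Ici] at hs
      have hs0 : (0:ℝ) < s := hs
      have : 1 / 2 + (1 * (2 * (1 + s)) - s * (2 * 1)) / (2 * (1 + s)) ^ 2 - (1 + s)⁻¹ * 1
          = s ^ 2 / (2 * (1 + s) ^ 2) := by
        field_simp; ring
      rw [this]; positivity
  have h0 : (0:ℝ) ∈ Set.Ici (0:ℝ) := Set.mem_Ici.mpr le_rfl
  have := key h0 (Set.mem_Ici.mpr ht) ht
  simp only [Real.log_one, add_zero, zero_div, mul_zero] at this
  nlinarith [this]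


lemma tendsto_aux (x : ℝ) (c : ℝ) (hc : 0 < c) :
    Tendsto (fun n : ℕ => 1 / (c * (x + n))) atTop (𝓝 0) := by
  have h1 : Tendsto (fun n : ℕ => x + (n : ℝ)) atTop atTop :=
    tendsto_atTop_add_const_left _ x tendsto_natCast_atTop_atTop
  have h2 : Tendsto (fun n : ℕ => c * (x + (n : ℝ))) atTop atTop := h1.const_mul_atTop hc
  simpa only [one_div, Pi.inv_def] using h2.inv_tendsto_atTop

lemma digamma_upper {x : ℝ} (hx : 0 < x) : digamma x ≤ Real.log x - 1 / (2 * x) := by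
  have key : ∀ n : ℕ, digamma x ≤ Real.log x - 1 / (2 * x) + 1 / (2 * (x + n)) := by
    intro n
    have hxn : (0:ℝ) < x + n := by positivity
    have h1 := digamma_add_nat hx n
    have h2 := digamma_le_log hxn
    have h3 := log_add_nat hx n
    have h4 : ∑ k ∈ Finset.range n, (Real.log (1 + 1 / (x + k)) - 1 / (x + k))
        ≤ ∑ k ∈ Finset.range n, (1 / (2 * (x + (k+1):ℝ)) - 1 / (2 * (x + k))) := by
      apply Finset.sum_le_sum
      intro k _
      have hu : (0:ℝ) < x + k := by positivity
      have ht : (0:ℝ) ≤ 1 / (x + k) := by positivity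
      have := aux_log_le ht
      have e1 : (1 / (x + k)) / 2 = 1 / (2 * (x + k)) := by rw [div_div, mul_comm]
      have e2 : (1 / (x + k)) / (2 * (1 + 1 / (x + k))) = 1 / (2 * (x + (k+1):ℝ)) := by
        rw [div_eq_div_iff (by positivity) (by positivity)]
        field_simp
        ring
      rw [e1, e2] at this
      linarith
    have h5 : ∑ k ∈ Finset.range n, (1 / (2 * (x + ((k:ℝ)+1))) - 1 / (2 * (x + k)))
        = 1 / (2 * (x + n)) - 1 / (2 * x) := by
      have := Finset.sum_range_sub (fun k : ℕ => 1 / (2 * (x + (k:ℝ)))) n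
      simp only [Nat.cast_add, Nat.cast_one, Nat.cast_zero, add_zero] at this ⊢
      rw [← this]
    have hsum : digamma x = digamma (x + n) - ∑ k ∈ Finset.range n, 1 / (x + k) := by
      rw [h1]; ring
    rw [hsum]
    have : Real.log (x + n) - ∑ k ∈ Finset.range n, 1 / (x + k)
        = Real.log x + ∑ k ∈ Finset.range n, (Real.log (1 + 1 / (x + k)) - 1 / (x + k)) := by
      rw [Finset.sum_sub_distrib, h3]; ring
    nlinarith [h2, h4, h5, this, Finset.sum_sub_distrib (G := ℝ) (s := Finset.range n)
      (f := fun k : ℕ => Real.log (1 + 1 / (x + k))) (g := fun k : ℕ => 1 / (x + k))]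
  have hlim : Tendsto (fun n : ℕ => Real.log x - 1 / (2 * x) + 1 / (2 * (x + n))) atTop
      (𝓝 (Real.log x - 1 / (2 * x))) := by
    simpa using (tendsto_const_nhds.add (tendsto_aux x 2 two_pos))
  exact ge_of_tendsto' hlim key


lemma sq_sum_bound {x : ℝ} (hx : 0 < x) (n : ℕ) :
    ∑ k ∈ Finset.range n, 1 / (x + k) ^ 2 ≤ 1 / x ^ 2 + 1 / x := by
  cases n with
  | zero => simp; positivity
  | succ n =>
      rw [Finset.sum_range_succ']
      have h1 : ∑ k ∈ Finset.range n, 1 / (x + ((k:ℝ) + 1)) ^ 2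
          ≤ ∑ k ∈ Finset.range n, (1 / (x + k) - 1 / (x + ((k:ℝ)+1))) := by
        apply Finset.sum_le_sum
        intro k _
        have hu : (0:ℝ) < x + k := by positivity
        have e : 1 / (x + (k:ℝ)) - 1 / (x + ((k:ℝ)+1)) = 1 / ((x + k) * (x + (k:ℝ)+1)) := by
          rw [div_sub_div _ _ (by positivity) (by positivity)]
          congr 1 <;> ring
        rw [e]
        apply div_le_div_of_nonneg_left one_pos.le (by positivity)
        nlinarith
      have h2 : ∑ k ∈ Finset.range n, (1 / (x + (k:ℝ)) - 1 / (x + ((k:ℝ)+1)))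
          = 1 / x - 1 / (x + n) := by
        have := Finset.sum_range_sub' (fun k : ℕ => 1 / (x + (k:ℝ))) n
        simp only [Nat.cast_add, Nat.cast_one, Nat.cast_zero, add_zero] at this ⊢
        rw [← this]
      have h3 : ∑ k ∈ Finset.range n, 1 / (x + ((k:ℝ)+1)) ^ 2
          = ∑ k ∈ Finset.range n, 1 / (x + ↑(k+1)) ^ 2 := by
        apply Finset.sum_congr rfl; intro k _; push_cast; ring_nf
      have h4 : (0:ℝ) < x + n := by positivity
      have h5 : (0:ℝ) ≤ 1 / (x + (n:ℝ)) := by positivity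
      push_cast
      simp only [Nat.cast_zero, add_zero]
      nlinarith [h1, h2, h3]

lemma digamma_lower {x : ℝ} (hx : 0 < x) :
    Real.log x - 1 / (2 * x) - 1 / (2 * x ^ 2) ≤ digamma x := by
  have key : ∀ n : ℕ,
      Real.log x - 1 / (2 * x) - 1 / (2 * x ^ 2) - 1 / (1 * (x + n)) ≤ digamma x := by
    intro n
    have hxn : (0:ℝ) < x + n := by positivity
    -- digamma (x + (n+1)) ≥ log (x + n)
    have h2 : Real.log (x + n) ≤ digamma (x + (n + 1 : ℕ)) := by
      have := log_le_digamma_add_one hxn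
      have e : x + ((n:ℝ) + 1) = (x + n) + 1 := by ring
      push_cast
      rw [e]
      exact this
    have h1 := digamma_add_nat hx (n + 1)
    have h3 := log_add_nat hx n
    have h4 : ∑ k ∈ Finset.range n, (1 / (x + k) - Real.log (1 + 1 / (x + k)))
        ≤ ∑ k ∈ Finset.range n, 1 / (2 * (x + k) ^ 2) := by
      apply Finset.sum_le_sum
      intro k _
      have hu : (0:ℝ) < x + k := by positivity
      have ht : (0:ℝ) ≤ 1 / (x + k) := by positivity
      have := aux_log_ge ht
      have e : (1 / (x + (k:ℝ))) ^ 2 / 2 = 1 / (2 * (x + k) ^ 2) := by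
        rw [div_pow, one_pow, div_div, mul_comm]
      rw [e] at this
      linarith
    have h5 : ∑ k ∈ Finset.range n, 1 / (2 * (x + k) ^ 2) ≤ 1 / (2 * x ^ 2) + 1 / (2 * x) := by
      have := sq_sum_bound hx n
      have e : ∀ k ∈ Finset.range n, 1 / (2 * (x + (k:ℝ)) ^ 2) = (1/2) * (1 / (x + k) ^ 2) := by
        intro k _; simp only [one_div, mul_inv]
      rw [Finset.sum_congr rfl e, ← Finset.mul_sum]
      have e2 : 1 / (2 * x ^ 2) = 1 / 2 * (1 / x ^ 2) := by simp only [one_div, mul_inv]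
      have e3 : 1 / (2 * x) = 1 / 2 * (1 / x) := by simp only [one_div, mul_inv]
      rw [e2, e3]
      nlinarith
    have hsum : digamma x = digamma (x + (n+1 : ℕ)) - ∑ k ∈ Finset.range (n+1), 1 / (x + k) := by
      rw [h1]; ring
    have hsplit : ∑ k ∈ Finset.range (n+1), 1 / (x + k)
        = ∑ k ∈ Finset.range n, 1 / (x + (k:ℝ)) + 1 / (x + n) := Finset.sum_range_succ _ n
    have hlog : Real.log (x + n) - ∑ k ∈ Finset.range n, 1 / (x + k)
        = Real.log x - ∑ k ∈ Finset.range n, (1 / (x + k) - Real.log (1 + 1 / (x + k))) := by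
      rw [Finset.sum_sub_distrib, h3]; ring
    rw [hsum, hsplit]
    have hxn1 : 1 / (1 * (x + (n:ℝ))) = 1 / (x + n) := by rw [one_mul]
    nlinarith [h2, h4, h5, hlog]
  have hlim : Tendsto
      (fun n : ℕ => Real.log x - 1 / (2 * x) - 1 / (2 * x ^ 2) - 1 / (1 * (x + n))) atTop
      (𝓝 (Real.log x - 1 / (2 * x) - 1 / (2 * x ^ 2))) := by
    simpa using (tendsto_const_nhds.sub (tendsto_aux x 1 one_pos))
  exact le_of_tendsto' hlim key


/-- For every `x > 0`,
`log x − 1/(2x) − 1/x² ≤ ψ₀(x) ≤ log x`, and consequently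
`ψ₀(2x) − ψ₀(x) − log 2 ≤ 1/(4x) + 1/x²`. -/
theorem digamma_log_bounds (x : ℝ) (hx : 0 < x) :
    (Real.log x - 1 / (2 * x) - 1 / x ^ 2 ≤ digamma x ∧ digamma x ≤ Real.log x) ∧
    digamma (2 * x) - digamma x - Real.log 2 ≤ 1 / (4 * x) + 1 / x ^ 2 := by
  have hup := digamma_upper hx
  have hlow := digamma_lower hx
  have h2x : (0:ℝ) < 2 * x := by positivity
  have hup2 := digamma_upper h2x
  have hlog2x : Real.log (2 * x) = Real.log 2 + Real.log x :=
    Real.log_mul two_ne_zero hx.ne'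
  have e1 : 1 / (2 * (2 * x)) = 1 / (4 * x) := by ring_nf
  have e2 : 1 / (2 * x ^ 2) ≤ 1 / x ^ 2 :=
    one_div_le_one_div_of_le (by positivity) (by nlinarith)
  have e3 : (0:ℝ) < 1 / (2 * x) := by positivity
  have e4 : 1 / (4 * x) + 1 / (4 * x) = 1 / (2 * x) := by
    field_simp
    ring
  refine ⟨⟨by linarith, by linarith⟩, ?_⟩
  rw [hlog2x, e1] at hup2
  linarith
end

section
/- Let n·w ~ Multinomial(n, p) with p in the probability simplex. Then E[w_i log w_i] ≤ p_i log(p_i + (1−p_i)/n) for each i, and consequently E[Σ_i w_i log(w_i/p_i)] ≤ Σ_i p_i log(p_i + (1−p_i)/n) − Σ_i p_i log p_i, with the convention 0 log 0 = 0. -/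
/-!
Write `w_i = V/n` with `V ~ Bin(n, p_i)`. Size biasing, `E[V f(V)] = n p_i E[f(V' + 1)]` with
`V' ~ Bin(n - 1, p_i)`, turns `E[w_i log w_i]` into `p_i E[log((V' + 1)/n)]`, and Jensen's
inequality for the concave logarithm bounds this by
`p_i log E[(V' + 1)/n] = p_i log(p_i + (1 - p_i)/n)`.
Since `E[w_i] = p_i`, the expected reverse KL divergence differs from the sum of these terms
by exactly `∑ p_i log p_i`.
-/

open Finset Real

noncomputable def binomialWeight (n : ℕ) (q : ℝ) (k : ℕ) : ℝ :=
  n.choose k * q ^ k * (1 - q) ^ (n - k)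

theorem binomialWeight_nonneg {q : ℝ} (hq0 : 0 ≤ q) (hq1 : q ≤ 1) (n k : ℕ) :
    0 ≤ binomialWeight n q k := by
  have : 0 ≤ 1 - q := by linarith
  unfold binomialWeight
  positivity

theorem sum_binomialWeight (n : ℕ) (q : ℝ) :
    ∑ k ∈ range (n + 1), binomialWeight n q k = 1 := by
  have h := add_pow q (1 - q) n
  rw [add_sub_cancel, one_pow] at h
  rw [h]
  exact sum_congr rfl fun k _ => by unfold binomialWeight; ring

theorem succ_mul_binomialWeight_succ (n : ℕ) (q : ℝ) (k : ℕ) :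
    (k + 1 : ℝ) * binomialWeight (n + 1) q (k + 1) = (n + 1) * q * binomialWeight n q k := by
  have h : ((n + 1 : ℕ) : ℝ) * n.choose k = (n + 1).choose (k + 1) * (k + 1 : ℕ) := by
    exact_mod_cast Nat.add_one_mul_choose_eq n k
  push_cast at h
  unfold binomialWeight
  rw [Nat.add_sub_add_right]
  linear_combination (-(q ^ (k + 1) * (1 - q) ^ (n - k))) * h

/-- Size biasing: `E[V g(V)] = (n + 1) q E[g(V' + 1)]` for `V ~ Bin(n + 1, q)`, `V' ~ Bin(n, q)`. -/
theorem sum_binomialWeight_mul_nat_mul (n : ℕ) (q : ℝ) (g : ℕ → ℝ) :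
    ∑ k ∈ range (n + 2), binomialWeight (n + 1) q k * (k * g k) =
      (n + 1) * q * ∑ k ∈ range (n + 1), binomialWeight n q k * g (k + 1) := by
  rw [sum_range_succ', mul_sum]
  simp only [Nat.cast_zero, zero_mul, mul_zero, add_zero]
  refine sum_congr rfl fun k _ => ?_
  push_cast
  linear_combination g (k + 1) * succ_mul_binomialWeight_succ n q k

theorem sum_binomialWeight_mul_nat (n : ℕ) (q : ℝ) :
    ∑ k ∈ range (n + 1), binomialWeight n q k * k = n * q := by
  cases n with
  | zero => simp
  | succ n =>
    have h := sum_binomialWeight_mul_nat_mul n q 1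
    simp only [Pi.one_apply, mul_one, sum_binomialWeight] at h
    rw [h]
    push_cast
    ring

theorem sum_binomialWeight_mul_log_le {n : ℕ} (hn : 0 < n) {q : ℝ} (hq0 : 0 ≤ q)
    (hq1 : q ≤ 1) :
    ∑ k ∈ range (n + 1), binomialWeight n q k * (k / n * log (k / n)) ≤
      q * log (q + (1 - q) / n) := by
  obtain ⟨m, rfl⟩ : ∃ m, n = m + 1 := ⟨n - 1, by omega⟩
  push_cast
  have hmean : ∑ j ∈ range (m + 1), binomialWeight m q j * ((j + 1) / (m + 1)) =
      q + (1 - q) / (m + 1) := by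
    simp only [mul_div_assoc', mul_add, mul_one, ← sum_div, sum_add_distrib,
      sum_binomialWeight_mul_nat, sum_binomialWeight]
    field_simp
    ring
  have hjensen := strictConcaveOn_log_Ioi.concaveOn.le_map_sum
    (fun j _ => binomialWeight_nonneg hq0 hq1 m j) (sum_binomialWeight m q)
    (fun j _ => Set.mem_Ioi.mpr (by positivity : (0 : ℝ) < (j + 1) / (m + 1)))
  simp only [smul_eq_mul, hmean] at hjensen
  calc _ = (∑ k ∈ range (m + 2), binomialWeight (m + 1) q k * (k * log (k / (m + 1)))) /
          (m + 1) := by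
        rw [sum_div]
        exact sum_congr rfl fun k _ => by ring
    _ = q * ∑ j ∈ range (m + 1), binomialWeight m q j * log ((j + 1) / (m + 1)) := by
        rw [sum_binomialWeight_mul_nat_mul]
        push_cast
        field_simp
    _ ≤ q * log (q + (1 - q) / (m + 1)) := mul_le_mul_of_nonneg_left hjensen hq0

theorem mul_log_div_eq_mul_log_sub {q : ℝ} (hq : q ≠ 0) (x : ℝ) :
    x * log (x / q) = x * log x - x * log q := by
  rcases eq_or_ne x 0 with rfl | hx
  · simp
  · rw [log_div hx hq]
    ring

theorem sum_binomialWeight_mul_log_div {n : ℕ} (hn : 0 < n) {q : ℝ} (hq : q ≠ 0) :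
    ∑ k ∈ range (n + 1), binomialWeight n q k * (k / n * log (k / n / q)) =
      ∑ k ∈ range (n + 1), binomialWeight n q k * (k / n * log (k / n)) - q * log q := by
  have hmean : ∑ k ∈ range (n + 1), binomialWeight n q k * (k / n * log q) = q * log q := by
    simp only [← mul_assoc, mul_div_assoc', ← sum_mul, ← sum_div, sum_binomialWeight_mul_nat]
    field_simp
  simp only [mul_log_div_eq_mul_log_sub hq, mul_sub, sum_sub_distrib, hmean]

/-- Let `n·w ~ Multinomial(n, p)`, so that each `w_i = V_i/n` with
`V_i ~ Binomial(n, p_i)` marginally.  Then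
`E[w_i log w_i] ≤ p_i log(p_i + (1−p_i)/n)` for each `i`, and consequently
`E[∑_i w_i log(w_i/p_i)] ≤ ∑_i p_i log(p_i + (1−p_i)/n) − ∑_i p_i log p_i`
(with the convention `0 log 0 = 0`, which holds automatically since `Real.log 0 = 0`).
Expectations are written out as the explicit binomial sums. -/
theorem multinomial_expected_entropy_bound (n : ℕ) (hn : 1 ≤ n) (p : Fin n → ℝ)
    (hp : ∀ i, 0 < p i) (hsum : ∑ i, p i = 1) :
    (∀ i, ∑ k ∈ Finset.range (n + 1),
        (n.choose k : ℝ) * p i ^ k * (1 - p i) ^ (n - k)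
          * (((k : ℝ) / n) * Real.log ((k : ℝ) / n)) ≤
      p i * Real.log (p i + (1 - p i) / n)) ∧
    ∑ i, ∑ k ∈ Finset.range (n + 1),
        (n.choose k : ℝ) * p i ^ k * (1 - p i) ^ (n - k)
          * (((k : ℝ) / n) * Real.log (((k : ℝ) / n) / p i)) ≤
      ∑ i, p i * Real.log (p i + (1 - p i) / n) - ∑ i, p i * Real.log (p i) := by
  have hp_le_one : ∀ i, p i ≤ 1 := fun i =>
    hsum ▸ single_le_sum (fun j _ => (hp j).le) (mem_univ i)
  have hentropy : ∀ i,
      ∑ k ∈ range (n + 1), binomialWeight n (p i) k * (k / n * log (k / n)) ≤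
        p i * log (p i + (1 - p i) / n) := fun i =>
    sum_binomialWeight_mul_log_le hn (hp i).le (hp_le_one i)
  refine ⟨hentropy, ?_⟩
  calc ∑ i, ∑ k ∈ range (n + 1), binomialWeight n (p i) k * (k / n * log (k / n / p i))
      = ∑ i, (∑ k ∈ range (n + 1), binomialWeight n (p i) k * (k / n * log (k / n))
          - p i * log (p i)) :=
        sum_congr rfl fun i _ => sum_binomialWeight_mul_log_div hn (hp i).ne'
    _ ≤ _ := by
        rw [sum_sub_distrib]
        gcongr with i
        exact hentropy i
end

section
/- In the frequentist bootstrap case p_i = 1/n, the bound E[KL(w||p)] ≤ log(2 − 1/n) ≤ log 2 holds, where n·w ~ Multinomial(n, (1/n,...,1/n)). -/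
/-! Each `n w_i = V` is `Binomial(n, 1/n)`, so the expected divergence is `E[V log V]`.
Size-biasing the binomial law gives `E[V log V] = n p E[log (V' + 1)]` with `V' ~ Binomial(n - 1, p)`,
and Jensen's inequality for the concave `log` bounds this by `n p log ((n - 1) p + 1)`,
which is `log (2 - 1/n)` at `p = 1/n`. -/

open Finset

-- `E[V f V] = (m + 1) p E[f (V' + 1)]` for `V ~ Binomial(m + 1, p)`, `V' ~ Binomial(m, p)`.
theorem sum_choose_mul_pow_mul_natCast_mul {R : Type*} [CommSemiring R] (m : ℕ) (p q : R)
    (f : ℕ → R) :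
    ∑ k ∈ range (m + 2), ((m + 1).choose k : R) * p ^ k * q ^ (m + 1 - k) * (k * f k) =
      (m + 1) * p * ∑ j ∈ range (m + 1), (m.choose j : R) * p ^ j * q ^ (m - j) * f (j + 1) := by
  rw [sum_range_succ', mul_sum]
  simp only [Nat.cast_zero, zero_mul, mul_zero, add_zero]
  refine sum_congr rfl fun j _ => ?_
  have hchoose : ((m + 1).choose (j + 1) : R) * (j + 1) = (m + 1) * m.choose j := by
    simpa using congrArg (Nat.cast (R := R)) (Nat.add_one_mul_choose_eq m j).symm
  rw [Nat.add_sub_add_right, pow_succ]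
  push_cast
  calc _ = ((m + 1).choose (j + 1) : R) * (j + 1) * (p ^ j * p * q ^ (m - j) * f (j + 1)) := by
        ring
    _ = _ := by rw [hchoose]; ring

theorem sum_choose_mul_pow_mul_pow {R : Type*} [CommSemiring R] (m : ℕ) (p q : R)
    (hpq : p + q = 1) :
    ∑ k ∈ range (m + 1), (m.choose k : R) * p ^ k * q ^ (m - k) = 1 := by
  have hbinom := add_pow p q m
  rw [hpq, one_pow] at hbinom
  rw [hbinom]
  exact sum_congr rfl fun k _ => by ring

theorem sum_choose_mul_pow_mul_pow_mul_natCast {R : Type*} [CommSemiring R] (m : ℕ) (p q : R)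
    (hpq : p + q = 1) :
    ∑ k ∈ range (m + 1), (m.choose k : R) * p ^ k * q ^ (m - k) * k = m * p := by
  cases m with
  | zero => simp
  | succ m =>
    simpa [sum_choose_mul_pow_mul_pow m p q hpq] using
      sum_choose_mul_pow_mul_natCast_mul m p q fun _ => 1

theorem sum_choose_mul_pow_mul_log_succ_le (m : ℕ) {p : ℝ} (hp₀ : 0 ≤ p) (hp₁ : p ≤ 1) :
    ∑ j ∈ range (m + 1), (m.choose j : ℝ) * p ^ j * (1 - p) ^ (m - j) * Real.log (j + 1) ≤
      Real.log (m * p + 1) := by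
  have hpq : p + (1 - p) = 1 := add_sub_cancel p 1
  have hmean : ∑ j ∈ range (m + 1), (m.choose j : ℝ) * p ^ j * (1 - p) ^ (m - j) * (j + 1)
      = m * p + 1 := by
    simp only [mul_add, mul_one, sum_add_distrib, sum_choose_mul_pow_mul_pow_mul_natCast m p _ hpq,
      sum_choose_mul_pow_mul_pow m p _ hpq]
  rw [← hmean]
  simpa only [smul_eq_mul] using strictConcaveOn_log_Ioi.concaveOn.le_map_sum
    (fun j _ => by have := sub_nonneg.2 hp₁; positivity) (sum_choose_mul_pow_mul_pow m p _ hpq)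
    (fun j _ => show (0 : ℝ) < j + 1 by positivity)

theorem sum_choose_mul_pow_mul_mul_log_le (n : ℕ) {p : ℝ} (hp₀ : 0 ≤ p) (hp₁ : p ≤ 1) :
    ∑ k ∈ range (n + 1), (n.choose k : ℝ) * p ^ k * (1 - p) ^ (n - k) * (k * Real.log k) ≤
      n * p * Real.log ((n - 1) * p + 1) := by
  cases n with
  | zero => simp
  | succ m =>
    rw [sum_choose_mul_pow_mul_natCast_mul]
    push_cast
    simp only [add_sub_cancel_right]
    exact mul_le_mul_of_nonneg_left (sum_choose_mul_pow_mul_log_succ_le m hp₀ hp₁)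
      (by positivity)

theorem bootstrap_expected_reverse_kl_bound_general (n : ℕ) :
    (∑ _i : Fin n, ∑ k ∈ Finset.range (n + 1),
        (n.choose k : ℝ) * (1 / n) ^ k * (1 - 1 / n) ^ (n - k)
          * (((k : ℝ) / n) * Real.log ((n : ℝ) * ((k : ℝ) / n))) ≤
      Real.log (2 - 1 / n)) ∧
    Real.log (2 - 1 / (n : ℝ)) ≤ Real.log 2 := by
  have hinv_nonneg : 0 ≤ 1 / (n : ℝ) := by positivity
  have hinv_le_one : 1 / (n : ℝ) ≤ 1 := by simpa using Nat.cast_inv_le_one n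
  refine ⟨?_, Real.log_le_log (by linarith) (by linarith)⟩
  rcases n.eq_zero_or_pos with rfl | hn
  · simpa using Real.log_nonneg one_le_two
  have hn₀ : (n : ℝ) ≠ 0 := Nat.cast_ne_zero.2 hn.ne'
  have hterm : ∀ k ∈ range (n + 1),
      (n : ℝ) * ((n.choose k : ℝ) * (1 / n) ^ k * (1 - 1 / n) ^ (n - k)
        * (((k : ℝ) / n) * Real.log ((n : ℝ) * ((k : ℝ) / n)))) =
      (n.choose k : ℝ) * (1 / n) ^ k * (1 - 1 / n) ^ (n - k) * (k * Real.log k) := fun k _ => by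
    rw [mul_div_cancel₀ _ hn₀]; field_simp
  rw [sum_const, card_univ, Fintype.card_fin, nsmul_eq_mul, mul_sum, sum_congr rfl hterm]
  calc _ ≤ n * (1 / n) * Real.log ((n - 1) * (1 / n) + 1) :=
        sum_choose_mul_pow_mul_mul_log_le n hinv_nonneg hinv_le_one
    _ = Real.log (2 - 1 / n) := by
        rw [mul_one_div_cancel hn₀, one_mul]; congr 1; field_simp; ring

/-- In the frequentist bootstrap case `p_i = 1/n` with
`n·w ~ Multinomial(n, (1/n,...,1/n))` (so each `w_i = V_i/n`, `V_i ~ Binomial(n, 1/n)`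
marginally), the bound `E[KL(w||p)] ≤ log(2 − 1/n) ≤ log 2` holds, where
`KL(w||p) = ∑_i w_i log (n w_i)` (with `0 log 0 := 0`, automatic since `Real.log 0 = 0`).
The expectation is written as the explicit binomial sum. -/
theorem bootstrap_expected_reverse_kl_bound (n : ℕ) (hn : 1 ≤ n) :
    (∑ _i : Fin n, ∑ k ∈ Finset.range (n + 1),
        (n.choose k : ℝ) * (1 / n) ^ k * (1 - 1 / n) ^ (n - k)
          * (((k : ℝ) / n) * Real.log ((n : ℝ) * ((k : ℝ) / n))) ≤
      Real.log (2 - 1 / n)) ∧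
    Real.log (2 - 1 / (n : ℝ)) ≤ Real.log 2 :=
  bootstrap_expected_reverse_kl_bound_general n
end
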